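/- Correctness of a valid branching rule: let G be a finite simple graph and let (A₁,T₁),…,(Aₘ,Tₘ) be a finite nonempty family of pairs with Tₖ ⊆ Aₖ ⊆ V(G) and each Tₖ an independent set of G. If there exist a maximum independent set I of G and an index k with I ∩ Aₖ = Tₖ, then α(G) = max_{1≤k≤m} ( α(G[V(G) ∖ (Aₖ ∪ N(Tₖ))]) + |Tₖ| ). -/
import Mathlib


/-- A finset of vertices is an independent set of `G`: no two of its vertices are adjacent. -/
def IsIndepSet {V : Type*} (G : SimpleGraph V) (s : Finset V) : Prop :=
  ∀ v ∈ s, ∀ w ∈ s, ¬ G.Adj v w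

-- `alphaOn G A` is the independence number of the induced subgraph `G[A]`,
-- i.e. the maximum size of an independent set of `G` contained in `A`.
open Classical in
noncomputable def alphaOn {V : Type*} (G : SimpleGraph V) (A : Finset V) : ℕ :=
  (A.powerset.filter (fun s => IsIndepSet G s)).sup Finset.card

/-- `alpha G` is the independence number of `G`. -/
noncomputable def alpha {V : Type*} [Fintype V] (G : SimpleGraph V) : ℕ :=
  alphaOn G Finset.univ

-- `nbrFinset G T = (⋃ v ∈ T, N(v)) \ T`, the (open) neighborhood of a vertex set `T`.
open Classical in
noncomputable def nbrFinset {V : Type*} [Fintype V] (G : SimpleGraph V) (T : Finset V) : Finset V :=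
  (Finset.univ.filter (fun v => ∃ u ∈ T, G.Adj u v)) \ T

-- `boundary G R` is the set of vertices of `R` having a neighbor outside `R`.
open Classical in
noncomputable def boundary {V : Type*} [Fintype V] (G : SimpleGraph V) (R : Finset V) : Finset V :=
  R.filter (fun v => ∃ u, u ∉ R ∧ G.Adj v u)

-- `alphaRestricted G R S` is the maximum size of an independent set `J` of the induced
-- subgraph `G[R]` satisfying `J ∩ ∂R = S`.
open Classical in
noncomputable def alphaRestricted {V : Type*} [Fintype V] (G : SimpleGraph V) (R S : Finset V) : ℕ :=
  (R.powerset.filter (fun J => IsIndepSet G J ∧ J ∩ boundary G R = S)).sup Finset.card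

-- `maxIndepWithBoundary G R S` is the maximum size of an independent set `I` of `G`
-- satisfying `I ∩ ∂R = S`.
open Classical in
noncomputable def maxIndepWithBoundary {V : Type*} [Fintype V] (G : SimpleGraph V) (R S : Finset V) : ℕ :=
  (Finset.univ.powerset.filter (fun I => IsIndepSet G I ∧ I ∩ boundary G R = S)).sup Finset.card
lemma mem_nbrFinset {V : Type*} [Fintype V] (G : SimpleGraph V) (T : Finset V) (v : V) :
    v ∈ nbrFinset G T ↔ (∃ u ∈ T, G.Adj u v) ∧ v ∉ T := by
  rw [nbrFinset]
  simp

lemma le_alphaOn {V : Type*} (G : SimpleGraph V) (B s : Finset V)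
    (hsB : s ⊆ B) (hs : IsIndepSet G s) : s.card ≤ alphaOn G B := by
  classical
  rw [alphaOn]
  exact Finset.le_sup (Finset.mem_filter.mpr ⟨Finset.mem_powerset.mpr hsB, hs⟩)

lemma alphaOn_exists {V : Type*} (G : SimpleGraph V) (B : Finset V) :
    ∃ J, J ⊆ B ∧ IsIndepSet G J ∧ J.card = alphaOn G B := by
  classical
  rw [alphaOn]
  have hne : (B.powerset.filter (fun s => IsIndepSet G s)).Nonempty := by
    refine ⟨∅, Finset.mem_filter.mpr ⟨Finset.mem_powerset.mpr (Finset.empty_subset _), ?_⟩⟩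
    intro v hv
    exact absurd hv (Finset.notMem_empty v)
  obtain ⟨J, hJ, heq⟩ := Finset.exists_mem_eq_sup _ hne Finset.card
  rw [Finset.mem_filter, Finset.mem_powerset] at hJ
  exact ⟨J, hJ.1, hJ.2, heq.symm⟩

/-- correctness of a valid branching rule: given pairs `(Aₖ, Tₖ)` with
`Tₖ ⊆ Aₖ ⊆ V(G)` and each `Tₖ` independent, if some maximum independent set `I` of `G`
satisfies `I ∩ Aₖ = Tₖ` for some `k`, then
`α(G) = max_k (α(G[V(G) ∖ (Aₖ ∪ N(Tₖ))]) + |Tₖ|)`. -/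
theorem stmt_2 {V : Type*} [Fintype V] [DecidableEq V] (G : SimpleGraph V)
    (m : ℕ) (hm : 0 < m) (A T : Fin m → Finset V)
    (hTA : ∀ k, T k ⊆ A k) (hTindep : ∀ k, IsIndepSet G (T k))
    (hhit : ∃ I : Finset V, IsIndepSet G I ∧ I.card = alpha G ∧ ∃ k, I ∩ A k = T k) :
    alpha G = Finset.univ.sup
      (fun k : Fin m => alphaOn G (Finset.univ \ (A k ∪ nbrFinset G (T k))) + (T k).card) := by
  classical
  obtain ⟨I, hI, hIcard, k0, hIk⟩ := hhit
  apply le_antisymm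
  · have hTI : T k0 ⊆ I := by
      rw [← hIk]; exact Finset.inter_subset_left
    have hsub : I \ T k0 ⊆ Finset.univ \ (A k0 ∪ nbrFinset G (T k0)) := by
      intro v hv
      rw [Finset.mem_sdiff] at hv ⊢
      obtain ⟨hvI, hvT⟩ := hv
      refine ⟨Finset.mem_univ v, ?_⟩
      rw [Finset.mem_union]
      push_neg
      constructor
      · intro hvA
        exact hvT (hIk ▸ Finset.mem_inter.mpr ⟨hvI, hvA⟩)
      · intro hvN
        obtain ⟨⟨u, hu, hadj⟩, -⟩ := (mem_nbrFinset G _ v).mp hvN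
        exact hI u (hTI hu) v hvI hadj
    have h1 : (I \ T k0).card ≤ alphaOn G (Finset.univ \ (A k0 ∪ nbrFinset G (T k0))) :=
      le_alphaOn G _ _ hsub
        (fun v hv w hw => hI v (Finset.mem_sdiff.mp hv).1 w (Finset.mem_sdiff.mp hw).1)
    have h2 : (I \ T k0).card + (T k0).card = I.card := by
      rw [Finset.card_sdiff_of_subset hTI]
      exact Nat.sub_add_cancel (Finset.card_le_card hTI)
    calc alpha G = I.card := hIcard.symm
      _ ≤ alphaOn G (Finset.univ \ (A k0 ∪ nbrFinset G (T k0))) + (T k0).card := by omega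
      _ ≤ _ := Finset.le_sup
          (f := fun k : Fin m => alphaOn G (Finset.univ \ (A k ∪ nbrFinset G (T k))) + (T k).card)
          (Finset.mem_univ k0)
  · apply Finset.sup_le
    intro k _
    obtain ⟨J, hJB, hJindep, hJeq⟩ :=
      alphaOn_exists G (Finset.univ \ (A k ∪ nbrFinset G (T k)))
    have hdisj : Disjoint J (T k) := by
      rw [Finset.disjoint_left]
      intro v hvJ hvT
      have := hJB hvJ
      rw [Finset.mem_sdiff, Finset.mem_union] at this
      exact this.2 (Or.inl (hTA k hvT))
    have hcross : ∀ v ∈ J, ∀ u ∈ T k, ¬ G.Adj u v := by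
      intro v hvJ u huT hadj
      have hvB := hJB hvJ
      rw [Finset.mem_sdiff, Finset.mem_union] at hvB
      apply hvB.2
      right
      exact (mem_nbrFinset G _ v).mpr ⟨⟨u, huT, hadj⟩, fun hvT => hvB.2 (Or.inl (hTA k hvT))⟩
    have hindep : IsIndepSet G (J ∪ T k) := by
      intro v hv w hw
      rw [Finset.mem_union] at hv hw
      rcases hv with hv | hv <;> rcases hw with hw | hw
      · exact hJindep v hv w hw
      · intro hadj; exact hcross v hv w hw hadj.symm
      · exact hcross w hw v hv
      · exact hTindep k v hv w hw
    have := le_alphaOn G Finset.univ _ (Finset.subset_univ _) hindep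
    rw [Finset.card_union_of_disjoint hdisj] at this
    rw [← hJeq]
    exact this
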